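/- For κ > 0 and n ≥ 2 define the null vector operators 𝓛_j = (κ/2)∂_j² + ∑_{k≠j} [cot((θ_k−θ_j)/2)∂_k − ((6−κ)/(2κ))·(1/(2sin²((θ_k−θ_j)/2)))] acting on smooth functions on the chamber 𝔛ⁿ. Then for j ≠ k, the commutator satisfies [𝓛_j, 𝓛_k] = (1/sin²((θ_j−θ_k)/2))·(𝓛_k − 𝓛_j). -/

import Mathlib

/-- Partial derivative in the i-th coordinate direction. -/
noncomputable def pder (n : ℕ) (i : Fin n) (f : (Fin n → ℝ) → ℝ) :
    (Fin n → ℝ) → ℝ :=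
  fun θ => fderiv ℝ f θ (Pi.single i 1)

/-- The radial null vector operator
𝓛_j = (κ/2)∂_j² + ∑_{k≠j}[cot((θ_k−θ_j)/2)∂_k − ((6−κ)/(2κ))·1/(2sin²((θ_k−θ_j)/2))]. -/
noncomputable def Lop (n : ℕ) (κ : ℝ) (j : Fin n) (f : (Fin n → ℝ) → ℝ) :
    (Fin n → ℝ) → ℝ :=
  fun θ => κ / 2 * pder n j (pder n j f) θ
    + ∑ k ∈ Finset.univ.erase j,
        (Real.cot ((θ k - θ j) / 2) * pder n k f θ
          - (6 - κ) / (2 * κ) * (1 / (2 * Real.sin ((θ k - θ j) / 2) ^ 2)) * f θ)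

open Real Finset Topology

namespace SLEcomm

variable {n : ℕ}

noncomputable def dd (i a : Fin n) : ℝ := if a = i then 1 else 0

noncomputable def ctf (n : ℕ) (a b : Fin n) : (Fin n → ℝ) → ℝ :=
  fun θ => Real.cot ((θ a - θ b) / 2)

noncomputable def sqf (n : ℕ) (a b : Fin n) : (Fin n → ℝ) → ℝ :=
  fun θ => 1 / (2 * Real.sin ((θ a - θ b) / 2) ^ 2)

lemma contDiff_pder {f : (Fin n → ℝ) → ℝ} (hf : ContDiff ℝ (⊤ : ℕ∞) f) (i : Fin n) :
    ContDiff ℝ (⊤ : ℕ∞) (pder n i f) := by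
  have h : ContDiff ℝ (⊤ : ℕ∞) (fderiv ℝ f) := hf.fderiv_right (by simp)
  exact h.clm_apply contDiff_const

lemma pder_eq {f : (Fin n → ℝ) → ℝ} {L : (Fin n → ℝ) →L[ℝ] ℝ} {θ : Fin n → ℝ}
    (h : HasFDerivAt f L θ) (i : Fin n) : pder n i f θ = L (Pi.single i 1) := by
  unfold pder; rw [h.fderiv]

lemma pder_congr {f g : (Fin n → ℝ) → ℝ} {θ : Fin n → ℝ}
    (h : f =ᶠ[𝓝 θ] g) (i : Fin n) : pder n i f θ = pder n i g θ := by
  unfold pder; rw [h.fderiv_eq]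

-- Schwarz
lemma pder_comm {f : (Fin n → ℝ) → ℝ} (hf : ContDiff ℝ (⊤ : ℕ∞) f) (a b : Fin n) :
    pder n a (pder n b f) = pder n b (pder n a f) := by
  funext θ
  have hd : ∀ y, HasFDerivAt f (fderiv ℝ f y) y :=
    fun y => (hf.differentiable (by simp) y).hasFDerivAt
  have hd2 : DifferentiableAt ℝ (fderiv ℝ f) θ :=
    ((hf.fderiv_right (m := (⊤ : ℕ∞)) (by simp)).differentiable (by simp)) θ
  have hθ : HasFDerivAt (fderiv ℝ f) (fderiv ℝ (fderiv ℝ f) θ) θ := hd2.hasFDerivAt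
  have hsymm := second_derivative_symmetric hd hθ (Pi.single a 1) (Pi.single b 1)
  have e1 : ∀ (c : Fin n) (w : Fin n → ℝ), pder n c (fun x => fderiv ℝ f x w) θ
      = (fderiv ℝ (fderiv ℝ f) θ (Pi.single c 1)) w := by
    intro c w
    have : HasFDerivAt (fun x => fderiv ℝ f x w)
        ((fderiv ℝ (fderiv ℝ f) θ).flip w) θ := hθ.clm_apply (hasFDerivAt_const w θ) |>.congr_fderiv (by
          ext u; simp)
    rw [pder_eq this]; simp
  show pder n a (fun x => fderiv ℝ f x (Pi.single b 1)) θ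
      = pder n b (fun x => fderiv ℝ f x (Pi.single a 1)) θ
  rw [e1 a (Pi.single b 1), e1 b (Pi.single a 1)]
  exact hsymm

end SLEcomm

namespace SLEcomm2
open SLEcomm
variable {n : ℕ} {θ : Fin n → ℝ} {f g : (Fin n → ℝ) → ℝ}

lemma pder_add (hf : DifferentiableAt ℝ f θ) (hg : DifferentiableAt ℝ g θ) (i : Fin n) :
    pder n i (fun x => f x + g x) θ = pder n i f θ + pder n i g θ := by
  rw [pder_eq (hf.hasFDerivAt.fun_add hg.hasFDerivAt) i]; simp [pder]

lemma pder_sub (hf : DifferentiableAt ℝ f θ) (hg : DifferentiableAt ℝ g θ) (i : Fin n) :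
    pder n i (fun x => f x - g x) θ = pder n i f θ - pder n i g θ := by
  rw [pder_eq (hf.hasFDerivAt.fun_sub hg.hasFDerivAt) i]; simp [pder]

lemma pder_mul (hf : DifferentiableAt ℝ f θ) (hg : DifferentiableAt ℝ g θ) (i : Fin n) :
    pder n i (fun x => f x * g x) θ = pder n i f θ * g θ + f θ * pder n i g θ := by
  rw [pder_eq (hf.hasFDerivAt.fun_mul hg.hasFDerivAt) i]; simp [pder]; ring

lemma pder_const_mul (c : ℝ) (hf : DifferentiableAt ℝ f θ) (i : Fin n) :
    pder n i (fun x => c * f x) θ = c * pder n i f θ := by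
  rw [pder_eq (hf.hasFDerivAt.const_mul c) i]; simp [pder]

lemma pder_sum {s : Finset (Fin n)} {F : Fin n → (Fin n → ℝ) → ℝ}
    (h : ∀ m ∈ s, DifferentiableAt ℝ (F m) θ) (i : Fin n) :
    pder n i (fun x => ∑ m ∈ s, F m x) θ = ∑ m ∈ s, pder n i (F m) θ := by
  rw [pder_eq (HasFDerivAt.fun_sum (fun m hm => (h m hm).hasFDerivAt)) i]
  simp [pder]

lemma hasFDerivAt_half_sub (a b : Fin n) (θ : Fin n → ℝ) :
    HasFDerivAt (fun x : Fin n → ℝ => (x a - x b) / 2)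
      ((2:ℝ)⁻¹ • ((ContinuousLinearMap.proj (R := ℝ) (φ := fun _ : Fin n => ℝ) a)
        - (ContinuousLinearMap.proj (R := ℝ) (φ := fun _ : Fin n => ℝ) b))) θ := by
  set pa : (Fin n → ℝ) →L[ℝ] ℝ := ContinuousLinearMap.proj a with hpa
  set pb : (Fin n → ℝ) →L[ℝ] ℝ := ContinuousLinearMap.proj b with hpb
  have h : HasFDerivAt (fun x : Fin n → ℝ => x a - x b) (pa - pb) θ :=
    (pa.hasFDerivAt (x := θ)).sub (pb.hasFDerivAt (x := θ))
  have h2 := h.const_smul (2:ℝ)⁻¹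
  have e : (fun x : Fin n → ℝ => (x a - x b) / 2) = (fun x : Fin n → ℝ => (2:ℝ)⁻¹ • (x a - x b)) := by
    funext x; simp [smul_eq_mul]; ring
  rw [e]
  exact h2

lemma pder_comp_half_sub {φ : ℝ → ℝ} {d : ℝ} {a b : Fin n}
    (hφ : HasDerivAt φ d ((θ a - θ b) / 2)) (i : Fin n) :
    pder n i (fun x => φ ((x a - x b) / 2)) θ = d * (dd i a - dd i b) / 2 := by
  have h := hφ.comp_hasFDerivAt θ (hasFDerivAt_half_sub a b θ)
  rw [Function.comp_def] at h
  rw [pder_eq h i]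
  simp [dd, Pi.single_apply]
  ring

lemma diff_comp_half_sub {φ : ℝ → ℝ} {d : ℝ} {a b : Fin n}
    (hφ : HasDerivAt φ d ((θ a - θ b) / 2)) :
    DifferentiableAt ℝ (fun x : Fin n → ℝ => φ ((x a - x b) / 2)) θ :=
  ((hφ.comp_hasFDerivAt θ (hasFDerivAt_half_sub a b θ))).differentiableAt

lemma hasDerivAt_cot {x : ℝ} (h : Real.sin x ≠ 0) :
    HasDerivAt Real.cot (-(1 / Real.sin x ^ 2)) x := by
  have h1 : HasDerivAt (fun y => Real.cos y / Real.sin y) _ x := (Real.hasDerivAt_cos x).div (Real.hasDerivAt_sin x) h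
  have e : (fun y => Real.cos y / Real.sin y) = Real.cot :=
    funext fun y => (Real.cot_eq_cos_div_sin y).symm
  rw [e] at h1
  convert h1 using 1
  have hs := Real.sin_sq_add_cos_sq x
  field_simp
  nlinarith [hs]

lemma hasDerivAt_invsin {x : ℝ} (h : Real.sin x ≠ 0) :
    HasDerivAt (fun y => 1 / (2 * Real.sin y ^ 2)) (-(Real.cos x / Real.sin x ^ 3)) x := by
  have h2 : HasDerivAt (fun y => 2 * Real.sin y ^ 2)
      (2 * (2 * Real.sin x ^ 1 * Real.cos x)) x :=
    ((Real.hasDerivAt_sin x).pow 2).const_mul 2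
  have hne : 2 * Real.sin x ^ 2 ≠ 0 := by exact mul_ne_zero two_ne_zero (pow_ne_zero 2 h)
  have h1 : HasDerivAt (fun y => 1 / (2 * Real.sin y ^ 2)) _ x :=
    (hasDerivAt_const x (1:ℝ)).div h2 hne
  convert h1 using 1
  field_simp
  ring

end SLEcomm2

namespace SLEcomm3
open SLEcomm SLEcomm2
variable {n : ℕ} {θ : Fin n → ℝ}

lemma diff_ctf {a b : Fin n} (h : Real.sin ((θ a - θ b) / 2) ≠ 0) :
    DifferentiableAt ℝ (ctf n a b) θ :=
  diff_comp_half_sub (hasDerivAt_cot h)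

lemma pder_ctf {a b : Fin n} (h : Real.sin ((θ a - θ b) / 2) ≠ 0) (i : Fin n) :
    pder n i (ctf n a b) θ = -(sqf n a b θ) * (dd i a - dd i b) := by
  have := pder_comp_half_sub (θ := θ) (hasDerivAt_cot h) i
  rw [show ctf n a b = (fun x : Fin n → ℝ => Real.cot ((x a - x b) / 2)) from rfl, this]
  simp only [sqf]
  ring

lemma diff_sqf {a b : Fin n} (h : Real.sin ((θ a - θ b) / 2) ≠ 0) :
    DifferentiableAt ℝ (sqf n a b) θ :=
  diff_comp_half_sub (hasDerivAt_invsin h)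

lemma pder_sqf {a b : Fin n} (h : Real.sin ((θ a - θ b) / 2) ≠ 0) (i : Fin n) :
    pder n i (sqf n a b) θ = -(ctf n a b θ * sqf n a b θ) * (dd i a - dd i b) := by
  have := pder_comp_half_sub (θ := θ) (hasDerivAt_invsin h) i
  rw [show sqf n a b = (fun x : Fin n → ℝ => 1 / (2 * Real.sin ((x a - x b) / 2) ^ 2)) from rfl,
    this]
  simp only [ctf, sqf]
  rw [Real.cot_eq_cos_div_sin]
  ring

def Gset (n : ℕ) : Set (Fin n → ℝ) :=
  {θ | ∀ a b : Fin n, a ≠ b → Real.sin ((θ a - θ b) / 2) ≠ 0}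

lemma isOpen_Gset : IsOpen (Gset n) := by
  have : Gset n = ⋂ (a : Fin n), ⋂ (b : Fin n),
      {θ : Fin n → ℝ | a ≠ b → Real.sin ((θ a - θ b) / 2) ≠ 0} := by
    ext θ; simp [Gset, Set.mem_iInter]
  rw [this]
  refine isOpen_iInter_of_finite fun a => isOpen_iInter_of_finite fun b => ?_
  rcases eq_or_ne a b with rfl | hab
  · simp
  · have : {θ : Fin n → ℝ | a ≠ b → Real.sin ((θ a - θ b) / 2) ≠ 0}
        = (fun θ : Fin n → ℝ => Real.sin ((θ a - θ b) / 2)) ⁻¹' {0}ᶜ := by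
      ext θ; simp [hab]
    rw [this]
    exact (Real.continuous_sin.comp (((continuous_apply a).sub (continuous_apply b)).div_const 2)).isOpen_preimage _ (isOpen_compl_singleton)

end SLEcomm3

namespace SLEcomm4
open SLEcomm SLEcomm2 SLEcomm3

variable {n : ℕ} {θ : Fin n → ℝ} {κ : ℝ} {f : (Fin n → ℝ) → ℝ}

lemma diffAt_of_contDiff {g : (Fin n → ℝ) → ℝ} (hg : ContDiff ℝ (⊤ : ℕ∞) g) :
    DifferentiableAt ℝ g θ := (hg.differentiable (by simp)).differentiableAt

lemma Lop_eq (k : Fin n) (κ : ℝ) (f : (Fin n → ℝ) → ℝ) :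
    Lop n κ k f = fun x => κ / 2 * pder n k (pder n k f) x
      + ∑ m ∈ Finset.univ.erase k,
          (ctf n m k x * pder n m f x - (6 - κ) / (2 * κ) * sqf n m k x * f x) := rfl

lemma pder_Lop (hf : ContDiff ℝ (⊤ : ℕ∞) f) (k i : Fin n) (hθ : θ ∈ Gset n) :
    pder n i (Lop n κ k f) θ =
      κ / 2 * pder n i (pder n k (pder n k f)) θ
      + ∑ m ∈ Finset.univ.erase k,
          (-(sqf n m k θ) * (dd i m - dd i k) * pder n m f θ
            + ctf n m k θ * pder n i (pder n m f) θ
            + (6 - κ) / (2 * κ) * (ctf n m k θ * sqf n m k θ) * (dd i m - dd i k) * f θ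
            - (6 - κ) / (2 * κ) * sqf n m k θ * pder n i f θ) := by
  set c0 := (6 - κ) / (2 * κ) with hc0
  have hsin : ∀ m : Fin n, m ≠ k → Real.sin ((θ m - θ k) / 2) ≠ 0 := fun m hm => hθ m k hm
  have hdsum : ∀ m ∈ Finset.univ.erase k,
      DifferentiableAt ℝ (fun x => ctf n m k x * pder n m f x - c0 * sqf n m k x * f x) θ := by
    intro m hm
    have hmk := Finset.mem_erase.mp hm |>.1
    exact ((diff_ctf (hsin m hmk)).mul (diffAt_of_contDiff (contDiff_pder hf m))).sub
      ((((diff_sqf (hsin m hmk)).const_mul c0)).mul (diffAt_of_contDiff hf))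
  rw [Lop_eq]
  rw [pder_add ((diffAt_of_contDiff (contDiff_pder (contDiff_pder hf k) k)).const_mul (κ/2))
      (DifferentiableAt.fun_sum hdsum) i]
  rw [pder_const_mul _ (diffAt_of_contDiff (contDiff_pder (contDiff_pder hf k) k)) i]
  rw [pder_sum hdsum i]
  congr 1
  refine Finset.sum_congr rfl fun m hm => ?_
  have hmk := Finset.mem_erase.mp hm |>.1
  have h1 : pder n i (fun x => ctf n m k x * pder n m f x - c0 * sqf n m k x * f x) θ
      = pder n i (fun x => ctf n m k x * pder n m f x) θ
        - pder n i (fun x => (c0 * sqf n m k x) * f x) θ := by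
    have e : (fun x => ctf n m k x * pder n m f x - c0 * sqf n m k x * f x)
        = (fun x => ctf n m k x * pder n m f x - (c0 * sqf n m k x) * f x) := by
      funext x; ring
    rw [e, pder_sub ((diff_ctf (hsin m hmk)).fun_mul (diffAt_of_contDiff (contDiff_pder hf m)))
      (((diff_sqf (hsin m hmk)).const_mul c0).fun_mul (diffAt_of_contDiff hf)) i]
  rw [h1,
    pder_mul (diff_ctf (hsin m hmk)) (diffAt_of_contDiff (contDiff_pder hf m)) i,
    pder_mul ((diff_sqf (hsin m hmk)).const_mul c0) (diffAt_of_contDiff hf) i,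
    pder_const_mul _ (diff_sqf (hsin m hmk)) i,
    pder_ctf (hsin m hmk) i, pder_sqf (hsin m hmk) i]
  ring

end SLEcomm4

namespace SLEcomm5
open SLEcomm SLEcomm2 SLEcomm3 SLEcomm4

variable {n : ℕ} {θ : Fin n → ℝ} {κ : ℝ} {f : (Fin n → ℝ) → ℝ}

lemma pder_add4 {u1 u2 u3 u4 : (Fin n → ℝ) → ℝ}
    (d1 : DifferentiableAt ℝ u1 θ) (d2 : DifferentiableAt ℝ u2 θ)
    (d3 : DifferentiableAt ℝ u3 θ) (d4 : DifferentiableAt ℝ u4 θ) (i : Fin n) :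
    pder n i (fun x => u1 x + u2 x + u3 x - u4 x) θ
      = pder n i u1 θ + pder n i u2 θ + pder n i u3 θ - pder n i u4 θ := by
  rw [pder_sub ((d1.fun_add d2).fun_add d3) d4, pder_add (d1.fun_add d2) d3, pder_add d1 d2]

lemma pder_mul3 {g h w : (Fin n → ℝ) → ℝ}
    (dg : DifferentiableAt ℝ g θ) (dh : DifferentiableAt ℝ h θ)
    (dw : DifferentiableAt ℝ w θ) (i : Fin n) :
    pder n i (fun x => g x * h x * w x) θ
      = pder n i g θ * h θ * w θ + g θ * pder n i h θ * w θ + g θ * h θ * pder n i w θ := by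
  rw [pder_mul (dg.fun_mul dh) dw, pder_mul dg dh]; ring

lemma pder_pder_Lop (hf : ContDiff ℝ (⊤ : ℕ∞) f) (j k : Fin n) (hθ : θ ∈ Gset n) :
    pder n j (pder n j (Lop n κ k f)) θ =
      κ / 2 * pder n j (pder n j (pder n k (pder n k f))) θ
      + ∑ m ∈ Finset.univ.erase k,
          ((dd j m - dd j k) ^ 2 * (ctf n m k θ * sqf n m k θ) * pder n m f θ
            - 2 * ((dd j m - dd j k) * sqf n m k θ) * pder n j (pder n m f) θ
            + ctf n m k θ * pder n j (pder n j (pder n m f)) θ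
            - (6 - κ) / (2 * κ) * (dd j m - dd j k) ^ 2
                * (sqf n m k θ ^ 2 + ctf n m k θ ^ 2 * sqf n m k θ) * f θ
            + 2 * ((6 - κ) / (2 * κ)) * (dd j m - dd j k)
                * (ctf n m k θ * sqf n m k θ) * pder n j f θ
            - (6 - κ) / (2 * κ) * sqf n m k θ * pder n j (pder n j f) θ) := by
  set c0 := (6 - κ) / (2 * κ) with hc0
  -- the canonical first-derivative function
  set R1 : (Fin n → ℝ) → ℝ := fun x =>
    κ / 2 * pder n j (pder n k (pder n k f)) x
    + ∑ m ∈ Finset.univ.erase k,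
        ((-(dd j m - dd j k)) * (sqf n m k x * pder n m f x)
          + ctf n m k x * pder n j (pder n m f) x
          + (c0 * (dd j m - dd j k)) * (ctf n m k x * sqf n m k x * f x)
          - c0 * (sqf n m k x * pder n j f x)) with hR1
  have heq : pder n j (Lop n κ k f) =ᶠ[𝓝 θ] R1 := by
    filter_upwards [isOpen_Gset.mem_nhds hθ] with x hx
    rw [pder_Lop hf k j hx, hR1]
    congr 1
    refine Finset.sum_congr rfl fun m hm => ?_
    ring
  rw [pder_congr heq j, hR1]
  have hsin : ∀ m : Fin n, m ≠ k → Real.sin ((θ m - θ k) / 2) ≠ 0 := fun m hm => hθ m k hm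
  have hdsum : ∀ m ∈ Finset.univ.erase k, DifferentiableAt ℝ (fun x =>
      (-(dd j m - dd j k)) * (sqf n m k x * pder n m f x)
        + ctf n m k x * pder n j (pder n m f) x
        + (c0 * (dd j m - dd j k)) * (ctf n m k x * sqf n m k x * f x)
        - c0 * (sqf n m k x * pder n j f x)) θ := by
    intro m hm
    have hmk := Finset.mem_erase.mp hm |>.1
    have hs := hsin m hmk
    have dF1m := diffAt_of_contDiff (n := n) (θ := θ) (contDiff_pder hf m)
    have dF2jm := diffAt_of_contDiff (n := n) (θ := θ) (contDiff_pder (contDiff_pder hf m) j)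
    have dF1j := diffAt_of_contDiff (n := n) (θ := θ) (contDiff_pder hf j)
    have df := diffAt_of_contDiff (n := n) (θ := θ) hf
    exact ((((((diff_sqf hs).mul dF1m).const_mul _).add
      ((diff_ctf hs).mul dF2jm)).add
      ((((diff_ctf hs).mul (diff_sqf hs)).mul df).const_mul _)).sub
      (((diff_sqf hs).mul dF1j).const_mul c0))
  rw [pder_add (((diffAt_of_contDiff (contDiff_pder (contDiff_pder (contDiff_pder hf k) k) j))).const_mul (κ/2))
      (DifferentiableAt.fun_sum hdsum) j]
  rw [pder_const_mul _ (diffAt_of_contDiff (contDiff_pder (contDiff_pder (contDiff_pder hf k) k) j)) j]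
  rw [pder_sum hdsum j]
  congr 1
  refine Finset.sum_congr rfl fun m hm => ?_
  have hmk := Finset.mem_erase.mp hm |>.1
  have hs := hsin m hmk
  have dF1m := diffAt_of_contDiff (n := n) (θ := θ) (contDiff_pder hf m)
  have dF2jm := diffAt_of_contDiff (n := n) (θ := θ) (contDiff_pder (contDiff_pder hf m) j)
  have dF1j := diffAt_of_contDiff (n := n) (θ := θ) (contDiff_pder hf j)
  have df := diffAt_of_contDiff (n := n) (θ := θ) hf
  rw [pder_add4
      (((diff_sqf hs).fun_mul dF1m).const_mul _)
      ((diff_ctf hs).fun_mul dF2jm)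
      ((((diff_ctf hs).fun_mul (diff_sqf hs)).fun_mul df).const_mul _)
      (((diff_sqf hs).fun_mul dF1j).const_mul c0)]
  rw [pder_const_mul _ ((diff_sqf hs).fun_mul dF1m) j,
      pder_mul (diff_sqf hs) dF1m j,
      pder_mul (diff_ctf hs) dF2jm j,
      pder_const_mul _ (((diff_ctf hs).fun_mul (diff_sqf hs)).fun_mul df) j,
      pder_mul3 (diff_ctf hs) (diff_sqf hs) df j,
      pder_const_mul _ ((diff_sqf hs).fun_mul dF1j) j,
      pder_mul (diff_sqf hs) dF1j j,
      pder_ctf hs j, pder_sqf hs j]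
  ring

end SLEcomm5

namespace SLEcomm6
open SLEcomm SLEcomm2 SLEcomm3 SLEcomm4 SLEcomm5

variable {n : ℕ} {θ : Fin n → ℝ} {κ : ℝ} {f : (Fin n → ℝ) → ℝ}

lemma LopLop (hf : ContDiff ℝ (⊤ : ℕ∞) f) (j k : Fin n) (hθ : θ ∈ Gset n) :
    Lop n κ j (Lop n κ k f) θ =
      κ / 2 * (κ / 2 * pder n j (pder n j (pder n k (pder n k f))) θ
        + ∑ m ∈ Finset.univ.erase k,
          ((dd j m - dd j k) ^ 2 * (ctf n m k θ * sqf n m k θ) * pder n m f θ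
            - 2 * ((dd j m - dd j k) * sqf n m k θ) * pder n j (pder n m f) θ
            + ctf n m k θ * pder n j (pder n j (pder n m f)) θ
            - (6 - κ) / (2 * κ) * (dd j m - dd j k) ^ 2
                * (sqf n m k θ ^ 2 + ctf n m k θ ^ 2 * sqf n m k θ) * f θ
            + 2 * ((6 - κ) / (2 * κ)) * (dd j m - dd j k)
                * (ctf n m k θ * sqf n m k θ) * pder n j f θ
            - (6 - κ) / (2 * κ) * sqf n m k θ * pder n j (pder n j f) θ))
      + ∑ m ∈ Finset.univ.erase j,
          (ctf n m j θ * (κ / 2 * pder n m (pder n k (pder n k f)) θ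
            + ∑ l ∈ Finset.univ.erase k,
              (-(sqf n l k θ) * (dd m l - dd m k) * pder n l f θ
                + ctf n l k θ * pder n m (pder n l f) θ
                + (6 - κ) / (2 * κ) * (ctf n l k θ * sqf n l k θ) * (dd m l - dd m k) * f θ
                - (6 - κ) / (2 * κ) * sqf n l k θ * pder n m f θ))
          - (6 - κ) / (2 * κ) * sqf n m j θ * (κ / 2 * pder n k (pder n k f) θ
            + ∑ l ∈ Finset.univ.erase k,
              (ctf n l k θ * pder n l f θ - (6 - κ) / (2 * κ) * sqf n l k θ * f θ))) := by
  have e0 : Lop n κ j (Lop n κ k f) θ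
      = κ / 2 * pder n j (pder n j (Lop n κ k f)) θ
        + ∑ m ∈ Finset.univ.erase j,
            (ctf n m j θ * pder n m (Lop n κ k f) θ
              - (6 - κ) / (2 * κ) * sqf n m j θ * Lop n κ k f θ) := rfl
  rw [e0, pder_pder_Lop hf j k hθ]
  congr 1
  refine Finset.sum_congr rfl fun m hm => ?_
  rw [pder_Lop hf k m hθ]
  rfl

end SLEcomm6

namespace SLEtrig
open Real

lemma one_add_cot_sq {z : ℝ} (h : Real.sin z ≠ 0) :
    1 + Real.cot z ^ 2 = 1 / Real.sin z ^ 2 := by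
  rw [Real.cot_eq_cos_div_sin]
  rw [div_pow, one_add_div (pow_ne_zero 2 h), Real.sin_sq_add_cos_sq]

lemma cot_sub_cot {x y : ℝ} (hx : Real.sin x ≠ 0) (hy : Real.sin y ≠ 0) :
    (Real.cot x - Real.cot y) * (Real.sin x * Real.sin y) = Real.sin (y - x) := by
  rw [Real.cot_eq_cos_div_sin, Real.cot_eq_cos_div_sin, Real.sin_sub]
  field_simp

lemma cot_ne {x y : ℝ} (hx : Real.sin x ≠ 0) (hy : Real.sin y ≠ 0)
    (hxy : Real.sin (y - x) ≠ 0) : Real.cot x - Real.cot y ≠ 0 := by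
  intro h
  apply hxy
  rw [← cot_sub_cot hx hy, h, zero_mul]

lemma cot_sub' {x y : ℝ} (hx : Real.sin x ≠ 0) (hy : Real.sin y ≠ 0)
    (hxy : Real.sin (y - x) ≠ 0) :
    Real.cot (y - x) = (Real.cot x * Real.cot y + 1) / (Real.cot x - Real.cot y) := by
  have e1 := cot_sub_cot hx hy
  have e2 : (Real.cot x * Real.cot y + 1) * (Real.sin x * Real.sin y) = Real.cos (y - x) := by
    rw [Real.cot_eq_cos_div_sin, Real.cot_eq_cos_div_sin, Real.cos_sub]
    field_simp
  rw [Real.cot_eq_cos_div_sin, ← e1, ← e2, mul_div_mul_right _ _ (mul_ne_zero hx hy)]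

lemma half_inv_sq {z : ℝ} (h : Real.sin z ≠ 0) :
    1 / (2 * Real.sin z ^ 2) = (1 + Real.cot z ^ 2) / 2 := by
  rw [one_add_cot_sq h]; ring

lemma trig1 {x y : ℝ} (hx : Real.sin x ≠ 0) (hy : Real.sin y ≠ 0)
    (hxy : Real.sin (y - x) ≠ 0) :
    Real.cot y * (1 / (2 * Real.sin x ^ 2)) - Real.cot x * (1 / (2 * Real.sin y ^ 2))
      - Real.cot (y - x) * (1 / (2 * Real.sin y ^ 2) + 1 / (2 * Real.sin x ^ 2))
      = 2 * (1 / (2 * Real.sin (y - x) ^ 2)) * (Real.cot y - Real.cot x) := by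
  have huv := cot_ne hx hy hxy
  rw [half_inv_sq hx, half_inv_sq hy, half_inv_sq hxy, cot_sub' hx hy hxy]
  field_simp
  ring

lemma trig2 {x y : ℝ} (hx : Real.sin x ≠ 0) (hy : Real.sin y ≠ 0)
    (hxy : Real.sin (y - x) ≠ 0) :
    Real.cot x * Real.cot y * (1 / (2 * Real.sin y ^ 2) - 1 / (2 * Real.sin x ^ 2))
      + Real.cot (y - x) * (Real.cot y * (1 / (2 * Real.sin y ^ 2))
          + Real.cot x * (1 / (2 * Real.sin x ^ 2)))
      = -(2 * (1 / (2 * Real.sin (y - x) ^ 2))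
          * (1 / (2 * Real.sin y ^ 2) - 1 / (2 * Real.sin x ^ 2))) := by
  have huv := cot_ne hx hy hxy
  rw [half_inv_sq hx, half_inv_sq hy, half_inv_sq hxy, cot_sub' hx hy hxy]
  field_simp
  ring

end SLEtrig

namespace SLEkey
open Finset SLEcomm

lemma sum_c_mul {n : ℕ} (s : Finset (Fin n)) (c d : ℝ) (g : Fin n → ℝ) :
    ∑ m ∈ s, c * g m * d = c * (∑ m ∈ s, g m) * d := by
  rw [Finset.mul_sum, Finset.sum_mul]
  try exact Finset.sum_congr rfl fun _ _ => by ring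

lemma sum_lin3 {n : ℕ} (s : Finset (Fin n)) (c1 c2 c3 : ℝ)
    (g1 g2 g3 : Fin n → ℝ) :
    ∑ m ∈ s, (c1 * g1 m + c2 * g2 m + c3 * g3 m)
      = c1 * (∑ m ∈ s, g1 m) + c2 * (∑ m ∈ s, g2 m) + c3 * (∑ m ∈ s, g3 m) := by
  simp only [Finset.sum_add_distrib, ← Finset.mul_sum]

lemma sum_lin4 {n : ℕ} (s : Finset (Fin n)) (c1 c2 c3 c4 : ℝ)
    (g1 g2 g3 g4 : Fin n → ℝ) :
    ∑ m ∈ s, (c1 * g1 m + c2 * g2 m + c3 * g3 m + c4 * g4 m)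
      = c1 * (∑ m ∈ s, g1 m) + c2 * (∑ m ∈ s, g2 m) + c3 * (∑ m ∈ s, g3 m)
        + c4 * (∑ m ∈ s, g4 m) := by
  simp only [Finset.sum_add_distrib, ← Finset.mul_sum]

lemma key_algebra (n : ℕ) (j k : Fin n) (hjk : j ≠ k)
    (κ lam F0 F4 : ℝ) (C S : Fin n → Fin n → ℝ) (F1 : Fin n → ℝ)
    (F2 : Fin n → Fin n → ℝ) (F3 : Fin n → Fin n → Fin n → ℝ)
    (hκ : lam * κ = (6 - κ) / 2)
    (hC : ∀ a b, C b a = -C a b) (hS : ∀ a b, S b a = S a b)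
    (hF2 : ∀ a b, F2 a b = F2 b a)
    (hF3a : ∀ a b c, F3 a b c = F3 b a c) (hF3b : ∀ a b c, F3 a b c = F3 a c b)
    (hT1 : ∀ m, m ≠ j → m ≠ k →
      C m k * S m j - C m j * S m k - C j k * (S m k + S m j) = 2 * S j k * (C m k - C m j))
    (hT2 : ∀ m, m ≠ j → m ≠ k →
      C m j * C m k * (S m k - S m j) + C j k * (C m k * S m k + C m j * S m j)
        = -(2 * S j k * (S m k - S m j))) :
    (κ / 2 * (κ / 2 * F4 + ∑ m ∈ Finset.univ.erase k, ((dd j m - dd j k) ^ 2 * (C m k * S m k) * F1 m - 2 * ((dd j m - dd j k) * S m k) * F2 j m + C m k * F3 j j m - lam * (dd j m - dd j k) ^ 2 * (S m k ^ 2 + C m k ^ 2 * S m k) * F0 + 2 * lam * (dd j m - dd j k) * (C m k * S m k) * F1 j - lam * S m k * F2 j j)) + ∑ m ∈ Finset.univ.erase j, (C m j * (κ / 2 * F3 m k k + ∑ l ∈ Finset.univ.erase k, (-(S l k) * (dd m l - dd m k) * F1 l + C l k * F2 m l + lam * (C l k * S l k) * (dd m l - dd m k) * F0 - lam * S l k *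 F1 m)) - lam * S m j * (κ / 2 * F2 k k + (∑ l ∈ Finset.univ.erase k, (C l k * F1 l - lam * S l k * F0)))))
    - (κ / 2 * (κ / 2 * F4 + ∑ m ∈ Finset.univ.erase j, ((dd k m - dd k j) ^ 2 * (C m j * S m j) * F1 m - 2 * ((dd k m - dd k j) * S m j) * F2 k m + C m j * F3 k k m - lam * (dd k m - dd k j) ^ 2 * (S m j ^ 2 + C m j ^ 2 * S m j) * F0 + 2 * lam * (dd k m - dd k j) * (C m j * S m j) * F1 k - lam * S m j * F2 k k)) + ∑ m ∈ Finset.univ.erase k, (C m k * (κ / 2 * F3 m j j + ∑ l ∈ Finset.univ.erase j, (-(S l j) * (dd m l - dd m j) * F1 l + C l j * F2 m l + lam * (C l j * S l j) * (dd m l - dd m j) * F0 - lam * S l j * F1 m)) - lam * S m k * (κ / 2 * F2 j j + (∑ l ∈ Finset.univ.erase j, (C l j * F1 l - lam * S l j * F0)))))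
    = 2 * S j k * ((κ / 2 * F2 k k + (∑ l ∈ Finset.univ.erase k, (C l k * F1 l - lam * S l k * F0))) - (κ / 2 * F2 j j + (∑ l ∈ Finset.univ.erase j, (C l j * F1 l - lam * S l j * F0)))) := by
  have key0 : ∀ a b : Fin n, a ≠ b →
      (κ / 2 * (κ / 2 * F4 + ∑ m ∈ Finset.univ.erase b, ((dd a m - dd a b) ^ 2 * (C m b * S m b) * F1 m - 2 * ((dd a m - dd a b) * S m b) * F2 a m + C m b * F3 a a m - lam * (dd a m - dd a b) ^ 2 * (S m b ^ 2 + C m b ^ 2 * S m b) * F0 + 2 * lam * (dd a m - dd a b) * (C m b * S m b) * F1 a - lam * S m b * F2 a a)) + ∑ m ∈ Finset.univ.erase a, (C m a * (κ / 2 * F3 m b b + ∑ l ∈ Finset.univ.erase b, (-(S l b) * (dd m l - dd m b) * F1 l + C l b * F2 m l + lam * (C l b * S l b) * (dd m l - dd m b) * F0 - lam * S l b * F1 m)) - lam * S m a * (κ / 2 * F2 b b + (∑ l ∈ Finset.univ.erase b, (C l b * F1 l - lam * S l b * F0))))) = (κ / 2 * (κ / 2 * F4 + (C a b * S a b * F1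 a - 2 * S a b * F2 a a + C a b * F3 a a a - lam * (S a b ^ 2 + C a b ^ 2 * S a b) * F0 + 2 * lam * (C a b * S a b) * F1 a - lam * S a b * F2 a a) + (∑ m ∈ (Finset.univ.erase a).erase b, C m b * F3 a a m) - lam * (∑ m ∈ (Finset.univ.erase a).erase b, S m b) * F2 a a) + (∑ m ∈ Finset.univ.erase a, C m a * ∑ l ∈ Finset.univ.erase b, C l b * F2 m l) + C b a * (κ / 2 * F3 b b b + ((S a b * F1 a + ∑ m ∈ (Finset.univ.erase a).erase b, S m b * F1 m) - lam * F0 * (C a b * S a b + ∑ m ∈ (Finset.univ.erase a).erase b, C m b * S m b) - lam * (S a b + ∑ m ∈ (Finset.univ.erase a).erase b, S m b) * F1 b)) + (κ / 2 * (∑ m ∈ (Finset.univ.erase a).erase b, C m a * F3 b b m) - (∑ m ∈ (Finset.univ.erase a).erase b, C m a * S m b * F1 m) + lam * F0 * (∑ m ∈ (Finset.univ.erase a).erase b, C m a * C m b * S m b) - lam * (S a b + ∑ m ∈ (Finset.univ.erase a).erase b, S m b) * (∑ m ∈ (Finset.univ.erase a).erase b, C m a * F1 m)) - lam * (S b a +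 ∑ m ∈ (Finset.univ.erase a).erase b, S m a) * (κ / 2 * F2 b b + (∑ l ∈ Finset.univ.erase b, (C l b * F1 l - lam * S l b * F0)))) := by
    intro a b hab
    have hamem : a ∈ Finset.univ.erase b := Finset.mem_erase.mpr ⟨hab, Finset.mem_univ a⟩
    have hbmem : b ∈ Finset.univ.erase a := Finset.mem_erase.mpr ⟨Ne.symm hab, Finset.mem_univ b⟩
    have hba : b ≠ a := Ne.symm hab
    have hcomm : (Finset.univ.erase b).erase a = (Finset.univ.erase a).erase b :=
      Finset.erase_right_comm
    have H1 : (∑ m ∈ Finset.univ.erase b, ((dd a m - dd a b) ^ 2 * (C m b * S m b) * F1 m - 2 * ((dd a m - dd a b) * S m b) * F2 a m + C m b * F3 a a m - lam * (dd a m - dd a b) ^ 2 * (S m b ^ 2 + C m b ^ 2 * S m b) * F0 + 2 * lam * (dd a m - dd a b) * (C m b * S m b) * F1 a - lam * S m b * F2 a a))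
        = (C a b * S a b * F1 a - 2 * S a b * F2 a a + C a b * F3 a a a - lam * (S a b ^ 2 + C a b ^ 2 * S a b) * F0 + 2 * lam * (C a b * S a b) * F1 a - lam * S a b * F2 a a) + ((∑ m ∈ (Finset.univ.erase a).erase b, C m b * F3 a a m)
            - lam * (∑ m ∈ (Finset.univ.erase a).erase b, S m b) * F2 a a) := by
      rw [← Finset.add_sum_erase _ _ hamem, hcomm]
      have e1 : ((dd a a - dd a b) ^ 2 * (C a b * S a b) * F1 a - 2 * ((dd a a - dd a b) * S a b) * F2 a a + C a b * F3 a a a - lam * (dd a a - dd a b) ^ 2 * (S a b ^ 2 + C a b ^ 2 * S a b) * F0 + 2 * lam * (dd a a - dd a b) * (C a b * S a b) * F1 a - lam * S a b * F2 a a) = (C a b * S a b * F1 a - 2 * S a b * F2 a a + C a b * F3 a a a - lam * (S a b ^ 2 + C a b ^ 2 * S a b) * F0 + 2 * lam * (C a b * S a b) * F1 a - lam * S a b * F2 a a) := by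
        simp [dd, hba]
        try ring
      have e2 : (∑ m ∈ (Finset.univ.erase a).erase b, ((dd a m - dd a b) ^ 2 * (C m b * S m b) * F1 m - 2 * ((dd a m - dd a b) * S m b) * F2 a m + C m b * F3 a a m - lam * (dd a m - dd a b) ^ 2 * (S m b ^ 2 + C m b ^ 2 * S m b) * F0 + 2 * lam * (dd a m - dd a b) * (C m b * S m b) * F1 a - lam * S m b * F2 a a))
          = ∑ m ∈ (Finset.univ.erase a).erase b, (C m b * F3 a a m - lam * (S m b * F2 a a)) := by
        refine Finset.sum_congr rfl fun m hm => ?_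
        have hm1 : m ≠ b := (Finset.mem_erase.mp hm).1
        have hm2 : m ≠ a := (Finset.mem_erase.mp (Finset.mem_erase.mp hm).2).1
        simp [dd, hm1, hm2, hba]
        try ring
      have e3 : (∑ m ∈ (Finset.univ.erase a).erase b, (lam * (S m b * F2 a a)))
          = lam * (∑ m ∈ (Finset.univ.erase a).erase b, S m b) * F2 a a := by
        rw [Finset.mul_sum, Finset.sum_mul]
        try exact Finset.sum_congr rfl fun _ _ => by ring
      rw [e1, e2, Finset.sum_sub_distrib, e3]
    have sumSb : (∑ l ∈ Finset.univ.erase b, S l b)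
        = S a b + ∑ l ∈ (Finset.univ.erase a).erase b, S l b := by
      rw [← Finset.add_sum_erase _ _ hamem, hcomm]
    have inner2eval : ∀ m : Fin n, m ∈ (Finset.univ.erase a).erase b →
        (∑ l ∈ Finset.univ.erase b, (-(S l b) * (dd m l - dd m b) * F1 l + lam * (C l b * S l b) * (dd m l - dd m b) * F0 - lam * S l b * F1 m))
          = -(S m b) * F1 m + lam * (C m b * S m b) * F0
            - lam * (S a b + ∑ l ∈ (Finset.univ.erase a).erase b, S l b) * F1 m := by
      intro m hm
      have hm1 : m ≠ b := (Finset.mem_erase.mp hm).1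
      have hm2 : m ≠ a := (Finset.mem_erase.mp (Finset.mem_erase.mp hm).2).1
      have e : ∀ l ∈ Finset.univ.erase b, (-(S l b) * (dd m l - dd m b) * F1 l + lam * (C l b * S l b) * (dd m l - dd m b) * F0 - lam * S l b * F1 m)
          = (if l = m then (-(S l b) * F1 l + lam * (C l b * S l b) * F0) else 0)
            - lam * S l b * F1 m := by
        intro l hl
        have hl1 : l ≠ b := (Finset.mem_erase.mp hl).1
        by_cases hlm : l = m
        · subst hlm
          simp [dd, Ne.symm hl1]
          try ring
        · simp [dd, hlm, Ne.symm hm1]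
          try ring
      have eA : (∑ l ∈ Finset.univ.erase b,
            (if l = m then (-(S l b) * F1 l + lam * (C l b * S l b) * F0) else 0))
          = -(S m b) * F1 m + lam * (C m b * S m b) * F0 := by
        rw [Finset.sum_ite_eq' (Finset.univ.erase b) m
          (fun l => -(S l b) * F1 l + lam * (C l b * S l b) * F0),
          if_pos (Finset.mem_erase.mpr ⟨hm1, Finset.mem_univ m⟩)]
      have eB : (∑ l ∈ Finset.univ.erase b, (lam * S l b * F1 m))
          = lam * (∑ l ∈ Finset.univ.erase b, S l b) * F1 m :=
        sum_c_mul _ lam (F1 m) (fun l => S l b)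
      rw [Finset.sum_congr rfl e, Finset.sum_sub_distrib, eA, eB, sumSb]
    have evalb : (∑ l ∈ Finset.univ.erase b, (-(S l b) * (dd b l - dd b b) * F1 l + lam * (C l b * S l b) * (dd b l - dd b b) * F0 - lam * S l b * F1 b)) = ((S a b * F1 a + ∑ m ∈ (Finset.univ.erase a).erase b, S m b * F1 m) - lam * F0 * (C a b * S a b + ∑ m ∈ (Finset.univ.erase a).erase b, C m b * S m b) - lam * (S a b + ∑ m ∈ (Finset.univ.erase a).erase b, S m b) * F1 b) := by
      have e : ∀ l ∈ Finset.univ.erase b, (-(S l b) * (dd b l - dd b b) * F1 l + lam * (C l b * S l b) * (dd b l - dd b b) * F0 - lam * S l b * F1 b)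
          = 1 * (S l b * F1 l) + (-(lam * F0)) * (C l b * S l b) + (-(lam * F1 b)) * S l b := by
        intro l hl
        have hl1 : l ≠ b := (Finset.mem_erase.mp hl).1
        simp [dd, hl1]
        try ring
      rw [Finset.sum_congr rfl e, sum_lin3]
      have es1 : (∑ l ∈ Finset.univ.erase b, S l b * F1 l)
          = S a b * F1 a + ∑ l ∈ (Finset.univ.erase a).erase b, S l b * F1 l := by
        rw [← Finset.add_sum_erase _ _ hamem, hcomm]
      have es2 : (∑ l ∈ Finset.univ.erase b, C l b * S l b)
          = C a b * S a b + ∑ l ∈ (Finset.univ.erase a).erase b, C l b * S l b := by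
        rw [← Finset.add_sum_erase _ _ hamem, hcomm]
      rw [es1, es2, sumSb]
      ring
    have splitAll : ∀ m : Fin n,
        (∑ l ∈ Finset.univ.erase b, (-(S l b) * (dd m l - dd m b) * F1 l + C l b * F2 m l + lam * (C l b * S l b) * (dd m l - dd m b) * F0 - lam * S l b * F1 m))
          = (∑ l ∈ Finset.univ.erase b, C l b * F2 m l)
            + (∑ l ∈ Finset.univ.erase b, (-(S l b) * (dd m l - dd m b) * F1 l + lam * (C l b * S l b) * (dd m l - dd m b) * F0 - lam * S l b * F1 m)) := by
      intro m
      rw [← Finset.sum_add_distrib]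
      exact Finset.sum_congr rfl fun l hl => by ring
    have e4 : (∑ m ∈ Finset.univ.erase a, (C m a * (κ / 2 * F3 m b b + ∑ l ∈ Finset.univ.erase b, (-(S l b) * (dd m l - dd m b) * F1 l + lam * (C l b * S l b) * (dd m l - dd m b) * F0 - lam * S l b * F1 m))))
        = C b a * (κ / 2 * F3 b b b + ((S a b * F1 a + ∑ m ∈ (Finset.univ.erase a).erase b, S m b * F1 m) - lam * F0 * (C a b * S a b + ∑ m ∈ (Finset.univ.erase a).erase b, C m b * S m b) - lam * (S a b + ∑ m ∈ (Finset.univ.erase a).erase b, S m b) * F1 b)) + (κ / 2 * (∑ m ∈ (Finset.univ.erase a).erase b, C m a * F3 b b m) - (∑ m ∈ (Finset.univ.erase a).erase b, C m a * S m b * F1 m) + lam * F0 * (∑ m ∈ (Finset.univ.erase a).erase b, C m a * C m b * S m b) - lam * (S a b + ∑ m ∈ (Finset.univ.erase a).erase b, S m b) * (∑ m ∈ (Finset.univ.erase a).erase b, C m a * F1 m)) := by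
      rw [← Finset.add_sum_erase _ _ hbmem]
      have eb : (C b a * (κ / 2 * F3 b b b + ∑ l ∈ Finset.univ.erase b, (-(S l b) * (dd b l - dd b b) * F1 l + lam * (C l b * S l b) * (dd b l - dd b b) * F0 - lam * S l b * F1 b)))
          = C b a * (κ / 2 * F3 b b b + ((S a b * F1 a + ∑ m ∈ (Finset.univ.erase a).erase b, S m b * F1 m) - lam * F0 * (C a b * S a b + ∑ m ∈ (Finset.univ.erase a).erase b, C m b * S m b) - lam * (S a b + ∑ m ∈ (Finset.univ.erase a).erase b, S m b) * F1 b)) := by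
        rw [evalb]
      have es0 : (∑ m ∈ (Finset.univ.erase a).erase b, (C m a * (κ / 2 * F3 m b b + ∑ l ∈ Finset.univ.erase b, (-(S l b) * (dd m l - dd m b) * F1 l + lam * (C l b * S l b) * (dd m l - dd m b) * F0 - lam * S l b * F1 m)))) = (κ / 2 * (∑ m ∈ (Finset.univ.erase a).erase b, C m a * F3 b b m) - (∑ m ∈ (Finset.univ.erase a).erase b, C m a * S m b * F1 m) + lam * F0 * (∑ m ∈ (Finset.univ.erase a).erase b, C m a * C m b * S m b) - lam * (S a b + ∑ m ∈ (Finset.univ.erase a).erase b, S m b) * (∑ m ∈ (Finset.univ.erase a).erase b, C m a * F1 m)) := by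
        have e5 : ∀ m ∈ (Finset.univ.erase a).erase b, (C m a * (κ / 2 * F3 m b b + ∑ l ∈ Finset.univ.erase b, (-(S l b) * (dd m l - dd m b) * F1 l + lam * (C l b * S l b) * (dd m l - dd m b) * F0 - lam * S l b * F1 m)))
            = (κ / 2) * (C m a * F3 b b m) + (-1 : ℝ) * (C m a * S m b * F1 m)
              + (lam * F0) * (C m a * C m b * S m b)
              + (-(lam * (S a b + ∑ l ∈ (Finset.univ.erase a).erase b, S l b))) * (C m a * F1 m) := by
          intro m hm
          have hF3' : F3 m b b = F3 b b m := (hF3a m b b).trans (hF3b b m b)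
          rw [inner2eval m hm, hF3']
          ring
        rw [Finset.sum_congr rfl e5, sum_lin4]
        ring
      rw [eb, es0]
    have e1 : ∀ m ∈ Finset.univ.erase a,
        (C m a * (κ / 2 * F3 m b b + ∑ l ∈ Finset.univ.erase b, (-(S l b) * (dd m l - dd m b) * F1 l + C l b * F2 m l + lam * (C l b * S l b) * (dd m l - dd m b) * F0 - lam * S l b * F1 m))
          - lam * S m a * (κ / 2 * F2 b b + (∑ l ∈ Finset.univ.erase b, (C l b * F1 l - lam * S l b * F0))))
        = (C m a * ∑ l ∈ Finset.univ.erase b, C l b * F2 m l)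
          + (C m a * (κ / 2 * F3 m b b + ∑ l ∈ Finset.univ.erase b, (-(S l b) * (dd m l - dd m b) * F1 l + lam * (C l b * S l b) * (dd m l - dd m b) * F0 - lam * S l b * F1 m)))
          - lam * S m a * (κ / 2 * F2 b b + (∑ l ∈ Finset.univ.erase b, (C l b * F1 l - lam * S l b * F0))) := by
      intro m hm
      rw [splitAll m]
      ring
    have e2 : (∑ m ∈ Finset.univ.erase a, (lam * S m a * (κ / 2 * F2 b b + (∑ l ∈ Finset.univ.erase b, (C l b * F1 l - lam * S l b * F0)))))
        = lam * (∑ m ∈ Finset.univ.erase a, S m a) * (κ / 2 * F2 b b + (∑ l ∈ Finset.univ.erase b, (C l b * F1 l - lam * S l b * F0))) :=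
      sum_c_mul _ lam _ (fun m => S m a)
    have e3 : (∑ m ∈ Finset.univ.erase a, S m a)
        = S b a + ∑ m ∈ (Finset.univ.erase a).erase b, S m a := by
      rw [← Finset.add_sum_erase _ _ hbmem]
    rw [H1, Finset.sum_congr rfl e1, Finset.sum_sub_distrib, Finset.sum_add_distrib,
      e2, e3, e4]
    ring
  rw [key0 j k hjk, key0 k j (Ne.symm hjk)]
  rw [show (Finset.univ.erase k).erase j = (Finset.univ.erase j).erase k from
    Finset.erase_right_comm]
  have hDB : (∑ m ∈ Finset.univ.erase k, C m k * ∑ l ∈ Finset.univ.erase j, C l j * F2 m l) = (∑ m ∈ Finset.univ.erase j, C m j * ∑ l ∈ Finset.univ.erase k, C l k * F2 m l) := by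
    simp only [Finset.mul_sum]
    rw [Finset.sum_comm]
    refine Finset.sum_congr rfl fun m hm => Finset.sum_congr rfl fun l hl => ?_
    rw [hF2 l m]
    ring
  rw [hDB, hC j k, hS j k]
  have hLLk : (∑ l ∈ Finset.univ.erase k, (C l k * F1 l - lam * S l k * F0)) = (C j k * F1 j - lam * (S j k * F0))
      + ((∑ l ∈ (Finset.univ.erase j).erase k, C l k * F1 l) - lam * (∑ l ∈ (Finset.univ.erase j).erase k, S l k) * F0) := by
    rw [← Finset.add_sum_erase _ _ (Finset.mem_erase.mpr ⟨hjk, Finset.mem_univ j⟩),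
      Finset.erase_right_comm, Finset.sum_sub_distrib,
      sum_c_mul ((Finset.univ.erase j).erase k) lam F0 (fun l => S l k)]
    ring
  have hLLj : (∑ l ∈ Finset.univ.erase j, (C l j * F1 l - lam * S l j * F0)) = (-(C j k) * F1 k - lam * (S j k * F0))
      + ((∑ l ∈ (Finset.univ.erase j).erase k, C l j * F1 l) - lam * (∑ l ∈ (Finset.univ.erase j).erase k, S l j) * F0) := by
    rw [← Finset.add_sum_erase _ _ (Finset.mem_erase.mpr ⟨Ne.symm hjk, Finset.mem_univ k⟩),
      Finset.sum_sub_distrib,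
      sum_c_mul ((Finset.univ.erase j).erase k) lam F0 (fun l => S l j), hC j k, hS j k]
    ring
  rw [hLLk, hLLj]
  have hT1s : (∑ m ∈ (Finset.univ.erase j).erase k, C m k * S m j * F1 m)
      = 1 * (∑ m ∈ (Finset.univ.erase j).erase k, C m j * S m k * F1 m)
        + C j k * (∑ m ∈ (Finset.univ.erase j).erase k, (S m k * F1 m + S m j * F1 m))
        + (2 * S j k) * (∑ m ∈ (Finset.univ.erase j).erase k, (C m k * F1 m - C m j * F1 m)) := by
    rw [← sum_lin3]
    refine Finset.sum_congr rfl fun m hm => ?_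
    have hm1 : m ≠ k := (Finset.mem_erase.mp hm).1
    have hm2 : m ≠ j := (Finset.mem_erase.mp (Finset.mem_erase.mp hm).2).1
    linear_combination F1 m * hT1 m hm2 hm1
  have hT2s : (∑ m ∈ (Finset.univ.erase j).erase k, C m j * C m k * S m k)
      = 1 * (∑ m ∈ (Finset.univ.erase j).erase k, C m k * C m j * S m j)
        + (-(C j k)) * (∑ m ∈ (Finset.univ.erase j).erase k, (C m k * S m k + C m j * S m j))
        + (-(2 * S j k)) * (∑ m ∈ (Finset.univ.erase j).erase k, (S m k - S m j)) := by
    rw [← sum_lin3]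
    refine Finset.sum_congr rfl fun m hm => ?_
    have hm1 : m ≠ k := (Finset.mem_erase.mp hm).1
    have hm2 : m ≠ j := (Finset.mem_erase.mp (Finset.mem_erase.mp hm).2).1
    linear_combination hT2 m hm2 hm1
  rw [Finset.sum_add_distrib] at hT1s
  rw [Finset.sum_add_distrib, Finset.sum_sub_distrib] at hT2s
  rw [Finset.sum_sub_distrib] at hT1s
  linear_combination hT1s + lam * F0 * hT2s + C j k * S j k * (F1 j + F1 k) * hκ

end SLEkey

open Real Finset SLEcomm SLEcomm2 SLEcomm3 SLEcomm4 SLEcomm5 SLEcomm6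

/-- Commutation relation [𝓛_j, 𝓛_k] = (1/sin²((θ_j−θ_k)/2))(𝓛_k − 𝓛_j)
on smooth functions on the chamber. -/
theorem stmt_12 (n : ℕ) (hn : 2 ≤ n) (κ : ℝ) (hκ : 0 < κ)
    (X : Set (Fin n → ℝ))
    (hX : X = {θ | (∀ i j : Fin n, i < j → θ i < θ j) ∧
      ∀ i, θ i < θ ⟨0, by omega⟩ + 2 * Real.pi})
    (f : (Fin n → ℝ) → ℝ) (hf : ContDiff ℝ (⊤ : ℕ∞) f)
    (j k : Fin n) (hjk : j ≠ k) :
    ∀ θ ∈ X,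
      Lop n κ j (Lop n κ k f) θ - Lop n κ k (Lop n κ j f) θ
        = 1 / Real.sin ((θ j - θ k) / 2) ^ 2
            * (Lop n κ k f θ - Lop n κ j f θ) := by
  intro θ hθX
  have hG : θ ∈ Gset n := by
    rw [hX] at hθX
    obtain ⟨h1, h2⟩ := hθX
    have key : ∀ a b : Fin n, a < b → Real.sin ((θ b - θ a) / 2) ≠ 0 := by
      intro a b hab2
      have hlt1 : θ a < θ b := h1 a b hab2
      have hθ0a : θ ⟨0, by omega⟩ ≤ θ a := by
        have hz : (⟨0, by omega⟩ : Fin n) ≤ a := Fin.mk_le_of_le_val (Nat.zero_le _)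
        rcases eq_or_lt_of_le hz with he | hl
        · rw [he]
        · exact le_of_lt (h1 _ _ hl)
      have hub : θ b - θ a < 2 * Real.pi := by
        have := h2 b
        linarith
      have hpos : 0 < (θ b - θ a) / 2 := by linarith
      have hltpi : (θ b - θ a) / 2 < Real.pi := by linarith
      exact ne_of_gt (Real.sin_pos_of_pos_of_lt_pi hpos hltpi)
    intro a b hab
    rcases lt_or_gt_of_ne hab with h | h
    · rw [show (θ a - θ b) / 2 = -((θ b - θ a) / 2) by ring, Real.sin_neg]
      simpa using key a b h
    · exact key b a h
  have hsinjk : Real.sin ((θ j - θ k) / 2) ≠ 0 := hG j k hjk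
  have hRHS : 1 / Real.sin ((θ j - θ k) / 2) ^ 2 = 2 * sqf n j k θ := by
    show _ = 2 * (1 / (2 * Real.sin ((θ j - θ k) / 2) ^ 2))
    ring
  have h4' : pder n k (pder n k (pder n j (pder n j f)))
      = pder n j (pder n j (pder n k (pder n k f))) := by
    rw [pder_comm (contDiff_pder hf j) k j, pder_comm hf k j,
      pder_comm (contDiff_pder (contDiff_pder hf k) j) k j,
      pder_comm (contDiff_pder hf k) k j]
  rw [LopLop hf j k hG, LopLop hf k j hG, hRHS, h4']
  have hκ' : (6 - κ) / (2 * κ) * κ = (6 - κ) / 2 := by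
    field_simp
  have hC' : ∀ a b : Fin n, ctf n b a θ = -ctf n a b θ := by
    intro a b
    show Real.cot ((θ b - θ a) / 2) = -Real.cot ((θ a - θ b) / 2)
    rw [Real.cot_eq_cos_div_sin, Real.cot_eq_cos_div_sin,
      show (θ b - θ a) / 2 = -((θ a - θ b) / 2) by ring, Real.cos_neg, Real.sin_neg]
    ring
  have hS' : ∀ a b : Fin n, sqf n b a θ = sqf n a b θ := by
    intro a b
    show 1 / (2 * Real.sin ((θ b - θ a) / 2) ^ 2) = 1 / (2 * Real.sin ((θ a - θ b) / 2) ^ 2)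
    rw [show (θ b - θ a) / 2 = -((θ a - θ b) / 2) by ring, Real.sin_neg]
    ring
  have hF2' : ∀ a b : Fin n, pder n a (pder n b f) θ = pder n b (pder n a f) θ :=
    fun a b => congrFun (pder_comm hf a b) θ
  have hF3a' : ∀ a b c : Fin n,
      pder n a (pder n b (pder n c f)) θ = pder n b (pder n a (pder n c f)) θ :=
    fun a b c => congrFun (pder_comm (contDiff_pder hf c) a b) θ
  have hF3b' : ∀ a b c : Fin n,
      pder n a (pder n b (pder n c f)) θ = pder n a (pder n c (pder n b f)) θ :=
    fun a b c => congrFun (congrArg (pder n a) (pder_comm hf b c)) θ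
  have hT1' : ∀ m : Fin n, m ≠ j → m ≠ k →
      ctf n m k θ * sqf n m j θ - ctf n m j θ * sqf n m k θ
        - ctf n j k θ * (sqf n m k θ + sqf n m j θ)
        = 2 * sqf n j k θ * (ctf n m k θ - ctf n m j θ) := by
    intro m hmj hmk
    have hx := hG m j hmj
    have hy := hG m k hmk
    have hxy : Real.sin ((θ m - θ k) / 2 - (θ m - θ j) / 2) ≠ 0 := by
      rw [show (θ m - θ k) / 2 - (θ m - θ j) / 2 = (θ j - θ k) / 2 by ring]
      exact hsinjk
    have h := SLEtrig.trig1 hx hy hxy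
    simp only [ctf, sqf]
    rw [show (θ j - θ k) / 2 = (θ m - θ k) / 2 - (θ m - θ j) / 2 by ring]
    exact h
  have hT2' : ∀ m : Fin n, m ≠ j → m ≠ k →
      ctf n m j θ * ctf n m k θ * (sqf n m k θ - sqf n m j θ)
        + ctf n j k θ * (ctf n m k θ * sqf n m k θ + ctf n m j θ * sqf n m j θ)
        = -(2 * sqf n j k θ * (sqf n m k θ - sqf n m j θ)) := by
    intro m hmj hmk
    have hx := hG m j hmj
    have hy := hG m k hmk
    have hxy : Real.sin ((θ m - θ k) / 2 - (θ m - θ j) / 2) ≠ 0 := by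
      rw [show (θ m - θ k) / 2 - (θ m - θ j) / 2 = (θ j - θ k) / 2 by ring]
      exact hsinjk
    have h := SLEtrig.trig2 hx hy hxy
    simp only [ctf, sqf]
    rw [show (θ j - θ k) / 2 = (θ m - θ k) / 2 - (θ m - θ j) / 2 by ring]
    exact h
  exact SLEkey.key_algebra n j k hjk κ ((6 - κ) / (2 * κ)) (f θ)
    (pder n j (pder n j (pder n k (pder n k f))) θ)
    (fun a b => ctf n a b θ) (fun a b => sqf n a b θ)
    (fun m => pder n m f θ) (fun a b => pder n a (pder n b f) θ)
    (fun a b c => pder n a (pder n b (pder n c f)) θ)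
    hκ' hC' hS' hF2' hF3a' hF3b' hT1' hT2'
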